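/- Consider A = [[1, 0, 2], [0, 2, −2]] ∈ ℝ^{2×3} and b = (1, 1)^T. For every λ ∈ (0, 1) and every t ∈ [0, (1 − λ)/2), the vector x(t) = (1 − λ − 2t, (2 − λ + 4t)/4, t)^T is a minimizer of x ↦ (1/2)‖Ax − b‖² + λ‖x‖₁. In particular, for each λ ∈ (0, 1) the LASSO solution is not unique. -/

import Mathlib

/-!
Each `x(t)` satisfies the optimality condition `Aᵀ(b - A x) ∈ λ ∂‖·‖₁(x)` with the same
subgradient `(1, 1, 1)`: `x(t)` moves along the kernel direction `(-2, 1, 1)` of `A`, so the residual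
`b - A x(t) = (λ, λ/2)` does not depend on `t`, `Aᵀ (λ, λ/2) = λ (1, 1, 1)`, and `x(t) ≥ 0`.
The condition is sufficient by convexity: writing `r = A x₀ - b` and `d = x - x₀`,
`f x - f x₀ = ½‖A d‖² + ⟨Aᵀ r, d⟩ + λ (‖x‖₁ - ‖x₀‖₁) ≥ λ (‖x‖₁ - ‖x₀‖₁ - ⟨s, d⟩) ≥ 0`.
-/

open Finset Matrix

def l1 {n : ℕ} (x : Fin n → ℝ) : ℝ := ∑ i, |x i|

noncomputable def lassoObjective {m : Type*} [Fintype m] {n : ℕ} (A : Matrix m (Fin n) ℝ)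
    (b : m → ℝ) (lam : ℝ) (x : Fin n → ℝ) : ℝ :=
  (1/2) * (∑ j, ((A *ᵥ x) j - b j)^2) + lam * l1 x

/-- `∂‖·‖₁(x)`: with `|s i| ≤ 1`, the equation `s i * x i = |x i|` says `s i = sgn (x i)` where
`x i ≠ 0`. -/
def l1Subdiff {n : ℕ} (x : Fin n → ℝ) : Set (Fin n → ℝ) :=
  {s | ∀ i, |s i| ≤ 1 ∧ s i * x i = |x i|}

theorem dotProduct_le_l1 {n : ℕ} {s : Fin n → ℝ} (hs : ∀ i, |s i| ≤ 1) (x : Fin n → ℝ) :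
    s ⬝ᵥ x ≤ l1 x :=
  sum_le_sum fun i _ => calc
    s i * x i ≤ |s i * x i| := le_abs_self _
    _ = |s i| * |x i| := abs_mul _ _
    _ ≤ |x i| := mul_le_of_le_one_left (abs_nonneg _) (hs i)

theorem dotProduct_eq_l1_of_mem_l1Subdiff {n : ℕ} {s x : Fin n → ℝ} (hs : s ∈ l1Subdiff x) :
    s ⬝ᵥ x = l1 x :=
  sum_congr rfl fun i _ => (hs i).2

theorem const_one_mem_l1Subdiff {n : ℕ} {x : Fin n → ℝ} (hx : 0 ≤ x) :
    (fun _ => 1) ∈ l1Subdiff x := fun i => by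
  simp [abs_of_nonneg (hx i)]

theorem lassoObjective_le_of_mem_l1Subdiff {m : Type*} [Fintype m] {n : ℕ}
    {A : Matrix m (Fin n) ℝ} {b : m → ℝ} {lam : ℝ} {x₀ s : Fin n → ℝ} (hlam : 0 ≤ lam)
    (hopt : Aᵀ *ᵥ (b - A *ᵥ x₀) = lam • s) (hs : s ∈ l1Subdiff x₀) (x : Fin n → ℝ) :
    lassoObjective A b lam x₀ ≤ lassoObjective A b lam x := by
  set r := A *ᵥ x₀ - b
  set d := x - x₀
  have hresid : ∀ j, (A *ᵥ x) j - b j = r j + (A *ᵥ d) j := fun j => by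
    simp only [r, d, mulVec_sub, Pi.sub_apply]; ring
  have hcross : r ⬝ᵥ (A *ᵥ d) = -lam * (s ⬝ᵥ d) := by
    rw [dotProduct_mulVec, ← mulVec_transpose, show r = -(b - A *ᵥ x₀) from (neg_sub _ _).symm,
      mulVec_neg, hopt, neg_dotProduct, smul_dotProduct, smul_eq_mul, neg_mul]
  have hl1 : s ⬝ᵥ d ≤ l1 x - l1 x₀ := by
    rw [dotProduct_sub, dotProduct_eq_l1_of_mem_l1Subdiff hs]
    linarith [dotProduct_le_l1 (fun i => (hs i).1) x]
  have hsq : 0 ≤ ∑ j, (A *ᵥ d) j ^ 2 := sum_nonneg fun j _ => sq_nonneg _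
  have hexpand : ∑ j, ((A *ᵥ x) j - b j) ^ 2 =
      ∑ j, r j ^ 2 + 2 * r ⬝ᵥ (A *ᵥ d) + ∑ j, (A *ᵥ d) j ^ 2 := by
    simp only [hresid, add_sq, sum_add_distrib, dotProduct, mul_sum, mul_assoc]
  have hx₀ : lassoObjective A b lam x₀ = (1/2) * ∑ j, r j ^ 2 + lam * l1 x₀ := rfl
  rw [hx₀, lassoObjective, hexpand, hcross]
  nlinarith

theorem lasso_example_optimality (lam t : ℝ) :
    (!![1, 0, 2; 0, 2, -2] : Matrix (Fin 2) (Fin 3) ℝ)ᵀ *ᵥ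
        (![1, 1] - !![1, 0, 2; 0, 2, -2] *ᵥ ![1 - lam - 2*t, (2 - lam + 4*t)/4, t]) =
      lam • fun _ => 1 := by
  ext i
  fin_cases i <;> simp [mulVec, dotProduct, Fin.sum_univ_succ] <;> ring

theorem lasso_example_point_nonneg {lam t : ℝ} (hlam : lam < 1) (ht : 0 ≤ t)
    (ht' : t < (1 - lam)/2) : 0 ≤ ![1 - lam - 2*t, (2 - lam + 4*t)/4, t] := by
  intro i
  fin_cases i <;> simp <;> linarith

/-- For A = [[1,0,2],[0,2,−2]], b = (1,1) and any λ ∈ (0,1), every vector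
`x(t) = (1−λ−2t, (2−λ+4t)/4, t)` with `t ∈ [0, (1−λ)/2)` is a LASSO minimizer;
in particular the LASSO solution is not unique for each such λ. -/
theorem lasso_example_nonunique :
    let A : Matrix (Fin 2) (Fin 3) ℝ := !![1, 0, 2; 0, 2, -2]
    let b : Fin 2 → ℝ := ![1, 1]
    let f : ℝ → (Fin 3 → ℝ) → ℝ := fun lam x =>
      (1/2) * (∑ j, (A.mulVec x j - b j)^2) + lam * l1 x
    (∀ lam : ℝ, 0 < lam → lam < 1 → ∀ t : ℝ, 0 ≤ t → t < (1 - lam)/2 →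
      ∀ x : Fin 3 → ℝ,
        f lam ![1 - lam - 2*t, (2 - lam + 4*t)/4, t] ≤ f lam x) ∧
    (∀ lam : ℝ, 0 < lam → lam < 1 →
      ∃ y z : Fin 3 → ℝ, y ≠ z ∧ (∀ x, f lam y ≤ f lam x) ∧ (∀ x, f lam z ≤ f lam x)) := by
  intro A b f
  have hmin : ∀ lam : ℝ, 0 < lam → lam < 1 → ∀ t : ℝ, 0 ≤ t → t < (1 - lam)/2 →
      ∀ x, f lam ![1 - lam - 2*t, (2 - lam + 4*t)/4, t] ≤ f lam x :=
    fun lam hlam hlam' t ht ht' =>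
      lassoObjective_le_of_mem_l1Subdiff hlam.le (lasso_example_optimality lam t)
        (const_one_mem_l1Subdiff (lasso_example_point_nonneg hlam' ht ht'))
  refine ⟨hmin, fun lam hlam hlam' => ⟨_, _, ?_, hmin lam hlam hlam' 0 le_rfl (by linarith),
    hmin lam hlam hlam' ((1 - lam)/4) (by linarith) (by linarith)⟩⟩
  intro h
  have h₂ : (0 : ℝ) = (1 - lam)/4 := congrFun h 2
  linarith
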